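/- For all integers a, i with 1 ≤ a < i ≤ N, one has e_i f_{a,i+1} - f_{a,i+1} e_i = -q^{-1} f_{a,i} k_i^{-2} in U. -/

import Mathlib

noncomputable section

open FreeAlgebra

/-- `𝕜 = F(q)`, the field of rational functions over `F`. -/
abbrev kk (F : Type) [Field F] : Type := RatFunc F

/-- The variable `q`. -/
def qq (F : Type) [Field F] : kk F := RatFunc.X

/-- `v = q²`. -/
def vv (F : Type) [Field F] : kk F := qq F ^ 2

/-- The balanced quantum integer `[n]_v`. -/
def qint (F : Type) [Field F] (n : ℤ) : kk F :=
  (vv F ^ n - vv F ^ (-n)) / (vv F - (vv F)⁻¹)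

/-- The quantum factorial `[m]_v!`. -/
def qfact (F : Type) [Field F] (m : ℕ) : kk F :=
  ∏ j ∈ Finset.Icc 1 m, qint F j

/-- The balanced Gaussian binomial coefficient `C(n,i)_v`. -/
def qbinom (F : Type) [Field F] (n i : ℕ) : kk F :=
  qfact F n / (qfact F i * qfact F (n - i))

/-- The Cartan matrix of `sl(N+1)`, with 1-based indices. -/
def cartan (i j : ℕ) : ℤ :=
  if i = j then 2 else if i + 1 = j ∨ j + 1 = i then -1 else 0

/-- Generators of `U_q(sl(N+1))`: `e i`, `f i`, `k i`, `kinv i` (0-based `i : Fin N`,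
corresponding to the 1-based index `i+1`). -/
inductive Gen (N : ℕ) : Type
  | e : Fin N → Gen N
  | f : Fin N → Gen N
  | k : Fin N → Gen N
  | kinv : Fin N → Gen N

/-- The defining relations of `U_q(sl(N+1))`. -/
inductive UqRel (F : Type) [Field F] (N : ℕ) :
    FreeAlgebra (kk F) (Gen N) → FreeAlgebra (kk F) (Gen N) → Prop
  | kkinv (i : Fin N) : UqRel F N (ι (kk F) (Gen.k i) * ι (kk F) (Gen.kinv i)) 1
  | kinvk (i : Fin N) : UqRel F N (ι (kk F) (Gen.kinv i) * ι (kk F) (Gen.k i)) 1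
  | kcomm (i j : Fin N) :
      UqRel F N (ι (kk F) (Gen.k i) * ι (kk F) (Gen.k j))
        (ι (kk F) (Gen.k j) * ι (kk F) (Gen.k i))
  | ke (i j : Fin N) :
      UqRel F N (ι (kk F) (Gen.k i) * ι (kk F) (Gen.e j) * ι (kk F) (Gen.kinv i))
        ((qq F ^ cartan ((i : ℕ) + 1) ((j : ℕ) + 1)) • ι (kk F) (Gen.e j))
  | kf (i j : Fin N) :
      UqRel F N (ι (kk F) (Gen.k i) * ι (kk F) (Gen.f j) * ι (kk F) (Gen.kinv i))
        ((qq F ^ (-cartan ((i : ℕ) + 1) ((j : ℕ) + 1))) • ι (kk F) (Gen.f j))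
  | ef (i j : Fin N) :
      UqRel F N (ι (kk F) (Gen.e i) * ι (kk F) (Gen.f j) - ι (kk F) (Gen.f j) * ι (kk F) (Gen.e i))
        (if i = j then
          ((qq F ^ 2 - qq F ^ (-2 : ℤ))⁻¹) •
            ((ι (kk F) (Gen.k i)) ^ 2 - (ι (kk F) (Gen.kinv i)) ^ 2)
        else 0)
  | serre_e_near (i j : Fin N) (h : (i : ℕ) + 1 = j ∨ (j : ℕ) + 1 = i) :
      UqRel F N
        ((ι (kk F) (Gen.e i)) ^ 2 * ι (kk F) (Gen.e j)
          - (qq F ^ 2 + qq F ^ (-2 : ℤ)) •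
              (ι (kk F) (Gen.e i) * ι (kk F) (Gen.e j) * ι (kk F) (Gen.e i))
          + ι (kk F) (Gen.e j) * (ι (kk F) (Gen.e i)) ^ 2) 0
  | serre_f_near (i j : Fin N) (h : (i : ℕ) + 1 = j ∨ (j : ℕ) + 1 = i) :
      UqRel F N
        ((ι (kk F) (Gen.f i)) ^ 2 * ι (kk F) (Gen.f j)
          - (qq F ^ 2 + qq F ^ (-2 : ℤ)) •
              (ι (kk F) (Gen.f i) * ι (kk F) (Gen.f j) * ι (kk F) (Gen.f i))
          + ι (kk F) (Gen.f j) * (ι (kk F) (Gen.f i)) ^ 2) 0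
  | serre_e_far (i j : Fin N) (h : (i : ℕ) + 1 < j ∨ (j : ℕ) + 1 < i) :
      UqRel F N (ι (kk F) (Gen.e i) * ι (kk F) (Gen.e j))
        (ι (kk F) (Gen.e j) * ι (kk F) (Gen.e i))
  | serre_f_far (i j : Fin N) (h : (i : ℕ) + 1 < j ∨ (j : ℕ) + 1 < i) :
      UqRel F N (ι (kk F) (Gen.f i) * ι (kk F) (Gen.f j))
        (ι (kk F) (Gen.f j) * ι (kk F) (Gen.f i))

/-- The quantized enveloping algebra `U = U_q(sl(N+1))`. -/
abbrev Uq (F : Type) [Field F] (N : ℕ) : Type := RingQuot (UqRel F N)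

variable (F : Type) [Field F] (N : ℕ)

/-- The image of a generator in `U`. -/
def gen (g : Gen N) : Uq F N := RingQuot.mkAlgHom (kk F) (UqRel F N) (ι (kk F) g)

/-- `e_i` (1-based index `1 ≤ i ≤ N`; junk value `0` outside this range). -/
def egen (i : ℕ) : Uq F N :=
  if h : 1 ≤ i ∧ i ≤ N then gen F N (Gen.e ⟨i - 1, by omega⟩) else 0

/-- `f_i` (1-based index). -/
def fgen (i : ℕ) : Uq F N :=
  if h : 1 ≤ i ∧ i ≤ N then gen F N (Gen.f ⟨i - 1, by omega⟩) else 0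

/-- `k_i` (1-based index). -/
def kgen (i : ℕ) : Uq F N :=
  if h : 1 ≤ i ∧ i ≤ N then gen F N (Gen.k ⟨i - 1, by omega⟩) else 0

/-- `k_i⁻¹` (1-based index). -/
def kinvgen (i : ℕ) : Uq F N :=
  if h : 1 ≤ i ∧ i ≤ N then gen F N (Gen.kinv ⟨i - 1, by omega⟩) else 0

/-- Auxiliary recursion: `fword i d = f_{i, i+1+d}`. -/
def fword (i : ℕ) : ℕ → Uq F N
  | 0 => fgen F N i
  | d + 1 =>
      qq F • (fword i d * fgen F N (i + 1 + d)) -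
        (qq F)⁻¹ • (fgen F N (i + 1 + d) * fword i d)

/-- The quantum root vector `f_{i,j}` (for `1 ≤ i < j ≤ N+1`). -/
def fij (i j : ℕ) : Uq F N := fword F N i (j - i - 1)

/-- Product of `f_{a,b}` over successive entries of a list. -/
def fList : List ℕ → Uq F N
  | a :: b :: rest => fij F N a b * fList (b :: rest)
  | _ => 1

/-- `f_S` for a finite set `S` of indices. -/
def fSet (S : Finset ℕ) : Uq F N := fList F N (S.sort (· ≤ ·))

/-- The index set `𝕀` of subsets of `{1,…,N+1}` containing `1` and `N+1`. -/
def II : Finset (Finset ℕ) :=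
  (Finset.Icc 1 (N + 1)).powerset.filter fun I => 1 ∈ I ∧ N + 1 ∈ I

/-- `r(I) = {s - 1 : s ∈ {1,…,N+1} \ I}`. -/
def rSet (I : Finset ℕ) : Finset ℕ := (Finset.Icc 1 (N + 1) \ I).image (· - 1)

/-- `k_{σ_i} = k_1 ⋯ k_i`. -/
def kσ (i : ℕ) : Uq F N := ((List.range i).map fun j => kgen F N (j + 1)).prod

/-- `K_{σ_i} = k_{σ_i}²`. -/
def Kσ (i : ℕ) : Uq F N := kσ F N i ^ 2

/-- `k_{σ_i}⁻¹ = k_1⁻¹ ⋯ k_i⁻¹`. -/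
def kσinv (i : ℕ) : Uq F N := ((List.range i).map fun j => kinvgen F N (j + 1)).prod

/-- `K_{σ_i}⁻¹`. -/
def KσInv (i : ℕ) : Uq F N := kσinv F N i ^ 2

/-- The element `h_i = -q⁻¹ v^{-(i-1)} K_{σ_i}⁻¹ (K_{σ_i} v^i - K_{σ_i}⁻¹ v^{-i})/(v - v⁻¹) ∈ U`. -/
def hElt (i : ℕ) : Uq F N :=
  (-(qq F)⁻¹ * vv F ^ (1 - (i : ℤ)) * (vv F - (vv F)⁻¹)⁻¹) •
    (KσInv F N i * (vv F ^ (i : ℤ) • Kσ F N i - vv F ^ (-(i : ℤ)) • KσInv F N i))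

/-- `H_I = ∏_{i ∈ r(I)} h_i` (product taken in increasing order of indices). -/
def HI (I : Finset ℕ) : Uq F N := (((rSet N I).sort (· ≤ ·)).map (hElt F N)).prod

/-- A weight `λ` is recorded by its values `(λ, α_j)` for `1 ≤ j ≤ N`;
`pairσ lam i = (λ, σ_i) = (λ, α_1 + ⋯ + α_i)`. -/
def pairσ (lam : ℕ → ℤ) (i : ℕ) : ℤ := ∑ j ∈ Finset.Icc 1 i, lam j

/-- The scalar `h_i(λ) = -q⁻¹ v^{-((λ,σ_i)+i-1)} [(λ,σ_i)+i]_v`. -/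
def hval (lam : ℕ → ℤ) (i : ℕ) : kk F :=
  -(qq F)⁻¹ * vv F ^ (-(pairσ lam i + (i : ℤ) - 1)) * qint F (pairσ lam i + (i : ℤ))

/-- The scalar `H_I(λ) = ∏_{i ∈ r(I)} h_i(λ)`. -/
def HIval (lam : ℕ → ℤ) (I : Finset ℕ) : kk F := ∏ i ∈ rSet N I, hval F lam i

/-- The left ideal `J_λ` of `U` generated by `e_1, …, e_N` and the `k_j - q^{(λ,α_j)}`. -/
def vermaIdeal (lam : ℕ → ℤ) : Submodule (Uq F N) (Uq F N) :=
  Submodule.span (Uq F N)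
    ({x | ∃ j, 1 ≤ j ∧ j ≤ N ∧ x = egen F N j} ∪
      {x | ∃ j, 1 ≤ j ∧ j ≤ N ∧
        x = kgen F N j - algebraMap (kk F) (Uq F N) (qq F ^ lam j)})

/-- The Verma module `M(λ) = U/J_λ`. -/
abbrev Verma (lam : ℕ → ℤ) : Type := Uq F N ⧸ vermaIdeal F N lam

/-- The highest weight vector `v_λ`, the image of `1` in `M(λ)`. -/
def hw (lam : ℕ → ℤ) : Verma F N lam := Submodule.Quotient.mk 1

/-- The candidate Shapovalov element `Θ_η = Σ_{I ∈ 𝕀} f_I H_I`. -/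
def Theta : Uq F N := ∑ I ∈ II N, fSet F N I * HI F N I

/-- `D^n(λ)`: the `(n-1) × (n-1)` matrix over `U` with `(i,j)` entry (1-based)
`f_{i,j+1}` if `i ≤ j`, `-h_j(λ)·1` if `i = j+1`, and `0` otherwise. -/
def Dmat (lam : ℕ → ℤ) (n : ℕ) : Matrix (Fin (n - 1)) (Fin (n - 1)) (Uq F N) :=
  Matrix.of fun i j =>
    if (i : ℕ) ≤ (j : ℕ) then fij F N ((i : ℕ) + 1) ((j : ℕ) + 2)
    else if (i : ℕ) = (j : ℕ) + 1 then
      -(algebraMap (kk F) (Uq F N) (hval F lam ((j : ℕ) + 1)))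
    else 0

/-- The left-to-right determinant of a matrix with noncommutative entries. -/
def ldet {m : ℕ} (B : Matrix (Fin m) (Fin m) (Uq F N)) : Uq F N :=
  ∑ w : Equiv.Perm (Fin m),
    ((Equiv.Perm.sign w : ℤˣ) : ℤ) • ((List.finRange m).map fun j => B (w j) j).prod

end

/-!
Write `f_{a,i+1} = q f_{a,i} f_i - q⁻¹ f_i f_{a,i}`. The root vector `f_{a,i}` is built from
`f_a, …, f_{i-1}`, so it commutes with `e_i` and satisfies `k_i^{±1} f_{a,i} = q^{±1} f_{a,i} k_i^{±1}`
(only `f_{i-1}` is moved by `k_i`). Hence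
`[e_i, f_{a,i+1}] = q f_{a,i} [e_i, f_i] - q⁻¹ [e_i, f_i] f_{a,i}` with
`[e_i, f_i] = (k_i² - k_i⁻²)/(q² - q⁻²)`; moving `k_i^{±2}` to the right, the `k_i²` terms cancel
and the `k_i⁻²` terms leave the coefficient `(q⁻³ - q)/(q² - q⁻²) = -q⁻¹`.
-/

section QCommute

variable {R A : Type*} [Field R] [Ring A] [Algebra R A]

lemma mul_eq_smul_mul_of_mul_mul_eq_smul {u v a : A} {t : R} (hvu : v * u = 1)
    (h : u * a * v = t • a) : u * a = t • (a * u) := by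
  rw [← smul_mul_assoc, ← h, mul_assoc (u * a), hvu, mul_one]

lemma mul_eq_inv_smul_mul_of_mul_mul_eq_smul {u v a : A} {t : R} (hvu : v * u = 1) (ht : t ≠ 0)
    (h : u * a * v = t • a) : v * a = t⁻¹ • (a * v) := by
  rw [eq_inv_smul_iff₀ ht, ← mul_smul_comm, ← h, ← mul_assoc, ← mul_assoc, hvu, one_mul]

lemma pow_mul_eq_smul_mul_of_mul_eq_smul {x a : A} {t : R} (h : x * a = t • (a * x)) (n : ℕ) :
    x ^ n * a = t ^ n • (a * x ^ n) := by
  induction n with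
  | zero => simp
  | succ n ih =>
    rw [pow_succ', mul_assoc, ih, mul_smul_comm, ← mul_assoc, h, smul_mul_assoc, smul_smul,
      mul_assoc, ← pow_succ, pow_succ']

lemma mul_smul_mul_sub_smul_mul_of_commute {x a b : A} {t : R} (hxa : Commute x a)
    (hxb : x * b = t • (b * x)) (p p' : R) :
    x * (p • (a * b) - p' • (b * a)) = t • ((p • (a * b) - p' • (b * a)) * x) := by
  simp only [mul_sub, sub_mul, mul_smul_comm, smul_mul_assoc, smul_sub, ← mul_assoc, hxa.eq, hxb]
  simp only [mul_assoc, hxa.eq, hxb, mul_smul_comm, smul_smul, mul_comm t]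

lemma commutator_smul_mul_sub_smul_mul_of_commute {x a b : A} (hxa : Commute x a) (p p' : R) :
    x * (p • (a * b) - p' • (b * a)) - (p • (a * b) - p' • (b * a)) * x =
      p • (a * (x * b - b * x)) - p' • ((x * b - b * x) * a) := by
  simp only [mul_sub, sub_mul, mul_smul_comm, smul_mul_assoc, smul_sub, ← mul_assoc, hxa.eq]
  simp only [mul_assoc, hxa.eq]
  abel

end QCommute

section Scalars

variable (F : Type) [Field F]

lemma qq_ne_zero : qq F ≠ 0 := RatFunc.X_ne_zero

lemma qq_pow_four_ne_one : qq F ^ 4 ≠ 1 := by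
  rw [Ne, ← sub_eq_zero, qq, ← map_one (algebraMap (Polynomial F) (RatFunc F)),
    ← RatFunc.algebraMap_X, ← map_pow, ← map_sub, ← Polynomial.C_1]
  exact RatFunc.algebraMap_ne_zero (Polynomial.X_pow_sub_C_ne_zero (by norm_num) 1)

end Scalars

section Relations

variable {F : Type} [Field F] {N : ℕ}

/-! Out-of-range generators are `0`, so the relations below hold for all natural indices. -/

lemma gen_kinv_mul_gen_k (i : Fin N) : gen F N (Gen.kinv i) * gen F N (Gen.k i) = 1 := by
  simpa [gen] using RingQuot.mkAlgHom_rel (kk F) (UqRel.kinvk (F := F) i)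

lemma gen_k_mul_gen_f_mul_gen_kinv (i j : Fin N) :
    gen F N (Gen.k i) * gen F N (Gen.f j) * gen F N (Gen.kinv i) =
      qq F ^ (-cartan (i + 1) (j + 1)) • gen F N (Gen.f j) := by
  simpa [gen] using RingQuot.mkAlgHom_rel (kk F) (UqRel.kf (F := F) i j)

lemma gen_e_mul_gen_f_sub (i j : Fin N) :
    gen F N (Gen.e i) * gen F N (Gen.f j) - gen F N (Gen.f j) * gen F N (Gen.e i) =
      if i = j then (qq F ^ 2 - qq F ^ (-2 : ℤ))⁻¹ •
        (gen F N (Gen.k i) ^ 2 - gen F N (Gen.kinv i) ^ 2) else 0 := by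
  have h := RingQuot.mkAlgHom_rel (kk F) (UqRel.ef (F := F) i j)
  split_ifs at h ⊢ <;> simpa [gen] using h

lemma kgen_mul_fgen (i j : ℕ) :
    kgen F N i * fgen F N j = qq F ^ (-cartan i j) • (fgen F N j * kgen F N i) := by
  by_cases hi : 1 ≤ i ∧ i ≤ N
  · by_cases hj : 1 ≤ j ∧ j ≤ N
    · simp only [kgen, fgen, dif_pos hi, dif_pos hj]
      have h := gen_k_mul_gen_f_mul_gen_kinv (F := F) (N := N)
        ⟨i - 1, by omega⟩ ⟨j - 1, by omega⟩
      simp only [Nat.sub_add_cancel hi.1, Nat.sub_add_cancel hj.1] at h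
      exact mul_eq_smul_mul_of_mul_mul_eq_smul (gen_kinv_mul_gen_k _) h
    · simp [fgen, hj]
  · simp [kgen, hi]

lemma kinvgen_mul_fgen (i j : ℕ) :
    kinvgen F N i * fgen F N j = qq F ^ cartan i j • (fgen F N j * kinvgen F N i) := by
  by_cases hi : 1 ≤ i ∧ i ≤ N
  · by_cases hj : 1 ≤ j ∧ j ≤ N
    · simp only [kinvgen, fgen, dif_pos hi, dif_pos hj]
      have h := gen_k_mul_gen_f_mul_gen_kinv (F := F) (N := N)
        ⟨i - 1, by omega⟩ ⟨j - 1, by omega⟩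
      simp only [Nat.sub_add_cancel hi.1, Nat.sub_add_cancel hj.1] at h
      simpa using mul_eq_inv_smul_mul_of_mul_mul_eq_smul (gen_kinv_mul_gen_k _)
        (zpow_ne_zero _ (qq_ne_zero F)) h
    · simp [fgen, hj]
  · simp [kinvgen, hi]

lemma commute_egen_fgen {i j : ℕ} (hij : i ≠ j) : Commute (egen F N i) (fgen F N j) := by
  by_cases hi : 1 ≤ i ∧ i ≤ N
  · by_cases hj : 1 ≤ j ∧ j ≤ N
    · have h := gen_e_mul_gen_f_sub (F := F) (N := N) ⟨i - 1, by omega⟩ ⟨j - 1, by omega⟩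
      rw [if_neg (by simp only [Fin.mk.injEq]; omega), sub_eq_zero] at h
      simpa only [Commute, SemiconjBy, egen, fgen, dif_pos hi, dif_pos hj] using h
    · simp [fgen, hj]
  · simp [egen, hi]

lemma egen_mul_fgen_sub_fgen_mul_egen (i : ℕ) :
    egen F N i * fgen F N i - fgen F N i * egen F N i =
      (qq F ^ 2 - qq F ^ (-2 : ℤ))⁻¹ • (kgen F N i ^ 2 - kinvgen F N i ^ 2) := by
  by_cases hi : 1 ≤ i ∧ i ≤ N
  · simpa only [egen, fgen, kgen, kinvgen, dif_pos hi, if_pos] using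
      gen_e_mul_gen_f_sub (F := F) (N := N) ⟨i - 1, by omega⟩ ⟨i - 1, by omega⟩
  · simp [egen, fgen, kgen, kinvgen, hi]

end Relations

section RootVectors

variable {F : Type} [Field F] {N : ℕ}

lemma fword_succ (a d : ℕ) :
    fword F N a (d + 1) = qq F • (fword F N a d * fgen F N (a + 1 + d)) -
      (qq F)⁻¹ • (fgen F N (a + 1 + d) * fword F N a d) := rfl

lemma commute_fword {x : Uq F N} {a d : ℕ}
    (h : ∀ j, a ≤ j → j ≤ a + d → Commute x (fgen F N j)) :
    Commute x (fword F N a d) := by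
  induction d with
  | zero => exact h a le_rfl le_rfl
  | succ d ih =>
    have hW := ih fun j h₁ h₂ => h j h₁ (by omega)
    have hg := h (a + 1 + d) (by omega) (by omega)
    exact ((hW.mul_right hg).smul_right _).sub_right ((hg.mul_right hW).smul_right _)

lemma mul_fword_eq_smul_of_commute_of_mul_fgen_last {x : Uq F N} {t : kk F} {a d : ℕ}
    (h : ∀ j, a ≤ j → j < a + d → Commute x (fgen F N j))
    (hlast : x * fgen F N (a + d) = t • (fgen F N (a + d) * x)) :
    x * fword F N a d = t • (fword F N a d * x) := by
  cases d with
  | zero => exact hlast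
  | succ d =>
    rw [fword_succ, show a + 1 + d = a + (d + 1) by omega]
    exact mul_smul_mul_sub_smul_mul_of_commute
      (commute_fword fun j h₁ h₂ => h j h₁ (by omega)) hlast _ _

lemma fij_succ_right {a i : ℕ} (h : a < i) :
    fij F N a (i + 1) =
      qq F • (fij F N a i * fgen F N i) - (qq F)⁻¹ • (fgen F N i * fij F N a i) := by
  rw [fij, show i + 1 - a - 1 = i - a - 1 + 1 by omega, fword_succ,
    show a + 1 + (i - a - 1) = i by omega]
  rfl

lemma commute_egen_fij {a i : ℕ} (h : a < i) : Commute (egen F N i) (fij F N a i) :=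
  commute_fword fun _ _ hj => commute_egen_fgen (by omega)

lemma mul_fij_of_mul_fgen_eq_cartan_smul {x : Uq F N} {φ : ℤ → kk F} {a i : ℕ}
    (hφ : φ 0 = 1) (hx : ∀ j, x * fgen F N j = φ (cartan i j) • (fgen F N j * x))
    (h : a < i) :
    x * fij F N a i = φ (-1) • (fij F N a i * x) := by
  have hcartan_far : ∀ j, j + 1 < i → cartan i j = 0 := fun j hj => by
    simp only [cartan]; rw [if_neg (by omega), if_neg (by omega)]
  have hcartan_last : cartan i (i - 1) = -1 := by
    simp only [cartan]; rw [if_neg (by omega), if_pos (by omega)]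
  refine mul_fword_eq_smul_of_commute_of_mul_fgen_last (fun j _ hj => ?_) ?_
  · simpa [Commute, SemiconjBy, hcartan_far j (by omega), hφ] using hx j
  · rw [show a + (i - a - 1) = i - 1 by omega, hx, hcartan_last]

lemma kgen_mul_fij {a i : ℕ} (h : a < i) :
    kgen F N i * fij F N a i = qq F • (fij F N a i * kgen F N i) := by
  simpa using mul_fij_of_mul_fgen_eq_cartan_smul (φ := fun n => qq F ^ (-n)) (by simp)
    (kgen_mul_fgen i) h

lemma kinvgen_mul_fij {a i : ℕ} (h : a < i) :
    kinvgen F N i * fij F N a i = (qq F)⁻¹ • (fij F N a i * kinvgen F N i) := by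
  simpa using mul_fij_of_mul_fgen_eq_cartan_smul (φ := fun n => qq F ^ n) (by simp)
    (kinvgen_mul_fgen i) h

end RootVectors

theorem stmt3_general (F : Type) [Field F] (N : ℕ) (a i : ℕ)
    (hai : a < i) :
    egen F N i * fij F N a (i + 1) - fij F N a (i + 1) * egen F N i =
      (-(qq F)⁻¹) • (fij F N a i * (kinvgen F N i) ^ 2) := by
  have hk := pow_mul_eq_smul_mul_of_mul_eq_smul (kgen_mul_fij (F := F) (N := N) hai) 2
  have hkinv := pow_mul_eq_smul_mul_of_mul_eq_smul (kinvgen_mul_fij (F := F) (N := N) hai) 2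
  rw [fij_succ_right hai, commutator_smul_mul_sub_smul_mul_of_commute (commute_egen_fij hai),
    egen_mul_fgen_sub_fgen_mul_egen, smul_mul_assoc, sub_mul, hk, hkinv, mul_smul_comm, mul_sub]
  have hq := qq_ne_zero F
  simp only [smul_sub, smul_smul]
  -- the `k_i²` terms cancel
  rw [show (qq F)⁻¹ * ((qq F ^ 2 - qq F ^ (-2 : ℤ))⁻¹ * qq F ^ 2) =
      qq F * (qq F ^ 2 - qq F ^ (-2 : ℤ))⁻¹ by field_simp,
    sub_sub_sub_cancel_left, ← sub_smul]
  congr 1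
  have h4 : qq F ^ 4 - 1 ≠ 0 := sub_ne_zero.mpr (qq_pow_four_ne_one F)
  simp only [zpow_neg, zpow_ofNat]
  field_simp
  ring

/-- for `1 ≤ a < i ≤ N`:
`e_i f_{a,i+1} - f_{a,i+1} e_i = -q⁻¹ f_{a,i} k_i^{-2}` in `U`. -/
theorem stmt3 (F : Type) [Field F] (N : ℕ) (hN : 1 ≤ N) (a i : ℕ)
    (ha : 1 ≤ a) (hai : a < i) (hiN : i ≤ N) :
    egen F N i * fij F N a (i + 1) - fij F N a (i + 1) * egen F N i =
      (-(qq F)⁻¹) • (fij F N a i * (kinvgen F N i) ^ 2) :=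
  stmt3_general F N a i hai
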